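/- arXiv:2003.11954 — 6 statements merged into one kernel-verified Lean document; each statement's English description precedes it below -/
import Mathlib

section
/- Let G be a strongly connected finite directed graph whose edges are labeled either 'error' or 'error-free', with maximal ratio τ = max over all cycles of (number of error edges in the cycle)/(length of the cycle). Then for every walk ϖ of length n in G, the number of error edges in ϖ is at most τ·n + |S|, where S is the vertex set of G. -/
/-- `s` is a walk of length `n` in the graph with edge relation `A`. -/
def IsWalk {V : Type*} (A : V → V → Prop) (s : ℕ → V) (n : ℕ) : Prop :=
  ∀ i < n, A (s i) (s (i + 1))

/-- `s` is a simple cycle of length `l`. -/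
def IsCycle {V : Type*} (A : V → V → Prop) (s : ℕ → V) (l : ℕ) : Prop :=
  0 < l ∧ IsWalk A s l ∧ s l = s 0 ∧ Function.Injective (fun i : Fin l => s i.val)

/-- Number of error edges in the first `n` steps of the walk `s`. -/
def errCount {V : Type*} (lab : V → V → Bool) (s : ℕ → V) (n : ℕ) : ℕ :=
  ((Finset.range n).filter (fun i => lab (s i) (s (i + 1)) = true)).card


/-!
Any walk longer than `|S|` repeats a vertex, and the first repetition closes a simple cycle.
Cutting that cycle out leaves a shorter walk and removes at most `τ · l` error edges from a cycle
of length `l`. Repeating this, the walk decomposes into simple cycles plus a residual walk of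
length at most `|S|`, whose error edges number at most `|S|`; this needs `τ ≥ 0`, which holds
because some cycle attains `τ`.
-/

section ErrCount

variable {V : Type*} (lab : V → V → Bool)

lemma errCount_le (s : ℕ → V) (n : ℕ) : errCount lab s n ≤ n :=
  (Finset.card_filter_le _ _).trans (Finset.card_range n).le

lemma errCount_congr {s t : ℕ → V} {n : ℕ} (h : ∀ k ≤ n, s k = t k) :
    errCount lab s n = errCount lab t n := by
  unfold errCount
  congr 1
  refine Finset.filter_congr fun i hi => ?_
  rw [Finset.mem_range] at hi
  rw [h i hi.le, h (i + 1) hi]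

lemma errCount_add (s : ℕ → V) (m k : ℕ) :
    errCount lab s (m + k) = errCount lab s m + errCount lab (fun j => s (m + j)) k := by
  simp only [errCount, Finset.card_filter, Finset.sum_range_add, add_assoc]

end ErrCount

lemma IsWalk.shift {V : Type*} {A : V → V → Prop} {s : ℕ → V} {n : ℕ} (hw : IsWalk A s n)
    {i l : ℕ} (hil : i + l ≤ n) : IsWalk A (fun k => s (i + k)) l := fun k hk =>
  hw (i + k) (by omega)

lemma exists_first_repetition {V : Type*} [Fintype V] (s : ℕ → V) :
    ∃ i l, 0 < l ∧ i + l ≤ Fintype.card V ∧ s (i + l) = s i ∧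
      Function.Injective (fun k : Fin l => s (i + k)) := by
  classical
  obtain ⟨x, y, hxy, hy, hsxy⟩ : ∃ x y, x < y ∧ y ≤ Fintype.card V ∧ s x = s y := by
    obtain ⟨a, b, hab, hsab⟩ := Fintype.exists_ne_map_eq_of_card_lt
      (fun k : Fin (Fintype.card V + 1) => s k) (by simp)
    rcases Nat.lt_or_gt_of_ne (Fin.val_ne_of_ne hab) with h | h
    exacts [⟨a, b, h, by omega, hsab⟩, ⟨b, a, h, by omega, hsab.symm⟩]
  have hrep : ∃ j, ∃ i < j, s i = s j := ⟨y, x, hxy, hsxy⟩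
  obtain ⟨i, hij, hsij⟩ := Nat.find_spec hrep
  have hj : Nat.find hrep ≤ Fintype.card V := (Nat.find_min' hrep ⟨x, hxy, hsxy⟩).trans hy
  -- minimality of the first repetition makes `s` injective below it
  have hinj : ∀ p q, p < q → q < Nat.find hrep → s p ≠ s q := fun p q hpq hq h =>
    Nat.find_min hrep hq ⟨p, hpq, h⟩
  refine ⟨i, Nat.find hrep - i, by omega, by omega, by rw [Nat.add_sub_cancel' hij.le, hsij], ?_⟩
  intro x y hxy
  simp only at hxy
  by_contra hne
  rcases Nat.lt_or_gt_of_ne (Fin.val_ne_of_ne hne) with h | h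
  · exact hinj _ _ (by omega) (by omega) hxy
  · exact hinj _ _ (by omega) (by omega) hxy.symm

def dropSegment {V : Type*} (s : ℕ → V) (i l : ℕ) : ℕ → V :=
  fun k => if k < i then s k else s (k + l)

section DropSegment

variable {V : Type*} {s : ℕ → V} {i l : ℕ}

lemma dropSegment_of_le (hs : s (i + l) = s i) {k : ℕ} (hk : k ≤ i) :
    dropSegment s i l k = s k := by
  unfold dropSegment
  split_ifs with h
  · rfl
  · rw [show k = i by omega, hs]

lemma dropSegment_add (k : ℕ) : dropSegment s i l (i + k) = s (i + l + k) := by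
  simp only [dropSegment, if_neg (Nat.not_lt.mpr (Nat.le_add_right i k))]
  congr 1
  omega

lemma IsWalk.dropSegment {A : V → V → Prop} {r : ℕ} (hw : IsWalk A s (i + l + r))
    (hs : s (i + l) = s i) : IsWalk A (dropSegment s i l) (i + r) := by
  intro k hk
  rcases Nat.lt_or_ge k i with h | h
  · rw [dropSegment_of_le hs h.le, dropSegment_of_le hs h]
    exact hw k (by omega)
  · obtain ⟨m, rfl⟩ := Nat.exists_eq_add_of_le h
    rw [dropSegment_add, add_assoc i m 1, dropSegment_add]
    exact hw (i + l + m) (by omega)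

lemma errCount_eq_errCount_dropSegment_add (lab : V → V → Bool) (hs : s (i + l) = s i)
    (r : ℕ) :
    errCount lab s (i + l + r) =
      errCount lab (dropSegment s i l) (i + r) + errCount lab (fun k => s (i + k)) l := by
  have hhead : errCount lab (dropSegment s i l) i = errCount lab s i :=
    errCount_congr lab fun k hk => dropSegment_of_le hs hk
  have htail : errCount lab (fun k => dropSegment s i l (i + k)) r =
      errCount lab (fun k => s (i + l + k)) r :=
    errCount_congr lab fun k _ => dropSegment_add k
  rw [errCount_add, errCount_add lab s i, errCount_add lab (dropSegment s i l), hhead, htail]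
  ring

end DropSegment

theorem errCount_le_of_isWalk {V : Type*} [Fintype V] {A : V → V → Prop} {lab : V → V → Bool}
    {τ : ℝ} (hτ : 0 ≤ τ)
    (hub : ∀ (s : ℕ → V) (l : ℕ), IsCycle A s l → (errCount lab s l : ℝ) ≤ τ * l)
    (n : ℕ) (s : ℕ → V) (hw : IsWalk A s n) :
    (errCount lab s n : ℝ) ≤ τ * n + Fintype.card V := by
  induction n using Nat.strong_induction_on generalizing s with
  | _ n ih =>
    by_cases hn : n ≤ Fintype.card V
    · have : (errCount lab s n : ℝ) ≤ Fintype.card V := by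
        exact_mod_cast (errCount_le lab s n).trans hn
      linarith [mul_nonneg hτ n.cast_nonneg]
    obtain ⟨i, l, hl, hil, hs, hinj⟩ := exists_first_repetition s
    obtain ⟨r, rfl⟩ : ∃ r, n = i + l + r := ⟨n - (i + l), by omega⟩
    have hcycle : IsCycle A (fun k => s (i + k)) l := ⟨hl, hw.shift le_self_add, hs, hinj⟩
    have hrest := ih (i + r) (by omega) _ (hw.dropSegment hs)
    have hcyc := hub _ l hcycle
    rw [errCount_eq_errCount_dropSegment_add lab hs r]
    push_cast at hrest ⊢
    linarith

theorem stmt1_general {V : Type*} [Fintype V]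
    (A : V → V → Prop) (lab : V → V → Bool)
    (τ : ℝ)
    (hub : ∀ (s : ℕ → V) (l : ℕ), IsCycle A s l → (errCount lab s l : ℝ) ≤ τ * l)
    (hach : ∃ (s : ℕ → V) (l : ℕ), IsCycle A s l ∧ (errCount lab s l : ℝ) = τ * l)
    (n : ℕ) (s : ℕ → V) (hw : IsWalk A s n) :
    (errCount lab s n : ℝ) ≤ τ * n + Fintype.card V := by
  obtain ⟨c, l, hc, hcτ⟩ := hach
  have hτ : 0 ≤ τ := by
    have hl : (0 : ℝ) < l := by exact_mod_cast hc.1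
    have : (0 : ℝ) ≤ τ * l := hcτ ▸ (errCount lab c l).cast_nonneg
    exact nonneg_of_mul_nonneg_left this hl
  exact errCount_le_of_isWalk hτ hub n s hw

theorem stmt1 {V : Type*} [Fintype V]
    (A : V → V → Prop) (lab : V → V → Bool)
    (hsc : ∀ u v : V, ∃ (m : ℕ) (s : ℕ → V), IsWalk A s m ∧ s 0 = u ∧ s m = v)
    (τ : ℝ)
    (hub : ∀ (s : ℕ → V) (l : ℕ), IsCycle A s l → (errCount lab s l : ℝ) ≤ τ * l)
    (hach : ∃ (s : ℕ → V) (l : ℕ), IsCycle A s l ∧ (errCount lab s l : ℝ) = τ * l)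
    (n : ℕ) (s : ℕ → V) (hw : IsWalk A s n) :
    (errCount lab s n : ℝ) ≤ τ * n + Fintype.card V :=
  stmt1_general A lab τ hub hach n s hw
end

section
/- Let G be a strongly connected finite directed graph with edges labeled 'error' or 'error-free', whose maximal ratio τ = e/l is achieved by a cycle with e error edges and length l. Then for every starting vertex s₀ and every n, there exists a walk ϖ of length n starting at s₀ whose number of error edges satisfies E(ϖ) > τ·n − l − |S|. -/
theorem shorten_walk {V : Type*} [Fintype V] (A : V → V → Prop) :
    ∀ m : ℕ, ∀ u v : V, (∃ s, IsWalk A s m ∧ s 0 = u ∧ s m = v) →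
    ∃ m' s, m' < Fintype.card V ∧ IsWalk A s m' ∧ s 0 = u ∧ s m' = v := by
  intro m
  induction m using Nat.strong_induction_on with
  | _ m ih =>
    intro u v ⟨s, hw, h0, hm⟩
    by_cases hlt : m < Fintype.card V
    · exact ⟨m, s, hlt, hw, h0, hm⟩
    · push_neg at hlt
      have hcard : Fintype.card V < Fintype.card (Fin (m + 1)) := by
        simp [Fintype.card_fin]; omega
      obtain ⟨a, b, hab, heq⟩ := Fintype.exists_ne_map_eq_of_card_lt
        (fun i : Fin (m+1) => s i.val) hcard
      have key : ∀ x y : ℕ, x < y → y ≤ m → s x = s y →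
          ∃ m' s, m' < Fintype.card V ∧ IsWalk A s m' ∧ s 0 = u ∧ s m' = v := by
        intro x y hxy hym hsxy
        set t : ℕ → V := fun k => if k ≤ x then s k else s (k + (y - x)) with ht
        have hlen : m - (y - x) < m := by omega
        refine ih (m - (y - x)) hlen u v ⟨t, ?_, ?_, ?_⟩
        · intro i hi
          rcases lt_trichotomy i x with h1 | h1 | h1
          · have e1 : t i = s i := by simp [ht, le_of_lt h1]
            have e2 : t (i+1) = s (i+1) := by simp [ht]; omega
            rw [e1, e2]; exact hw i (by omega)
          · have e1 : t i = s y := by simp [ht, h1, hsxy]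
            have e2 : t (i+1) = s (y+1) := by
              simp only [ht]
              rw [if_neg (by omega)]
              congr 1; omega
            rw [e1, e2]; exact hw y (by omega)
          · have e1 : t i = s (i + (y - x)) := by simp only [ht]; rw [if_neg (by omega)]
            have e2 : t (i+1) = s (i + (y - x) + 1) := by
              simp only [ht]; rw [if_neg (by omega)]; congr 1; omega
            rw [e1, e2]; exact hw (i + (y - x)) (by omega)
        · simp [ht, h0]
        · rcases eq_or_lt_of_le (show x ≤ m - (y - x) by omega) with h1 | h1
          · have hym' : y = m := by omega
            have : t (m - (y - x)) = s x := by simp [ht, ← h1]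
            rw [this, hsxy, hym', hm]
          · have : t (m - (y - x)) = s (m - (y - x) + (y - x)) := by
              simp only [ht]; rw [if_neg (by omega)]
            rw [this]
            have : m - (y - x) + (y - x) = m := by omega
            rw [this, hm]
      rcases lt_or_gt_of_ne (fun h => hab (Fin.ext h)) with h | h
      · exact key a b h (by omega) heq
      · exact key b a h (by omega) heq.symm

theorem filter_Ico_shift (a n : ℕ) (p : ℕ → Prop) [DecidablePred p] :
    ((Finset.Ico a (a+n)).filter p).card = ((Finset.range n).filter (fun i => p (a + i))).card := by
  have h : Finset.Ico a (a+n) = (Finset.range n).map (addLeftEmbedding a) := by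
    rw [Finset.range_eq_Ico, Finset.map_add_left_Ico]; simp
  rw [h, Finset.filter_map, Finset.card_map]
  congr 1


theorem errCount_add_s2 {V : Type*} (lab : V → V → Bool) (s : ℕ → V) (a b : ℕ) :
    errCount lab s (a + b)
      = errCount lab s a
        + ((Finset.range b).filter (fun i => lab (s (a + i)) (s (a + i + 1)) = true)).card := by
  unfold errCount
  rw [Finset.range_eq_Ico, ← Finset.Ico_union_Ico_eq_Ico (Nat.zero_le a) (Nat.le_add_right a b),
    Finset.filter_union, Finset.card_union_of_disjoint, ← Finset.range_eq_Ico,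
    filter_Ico_shift a b]
  exact Finset.disjoint_filter_filter (Finset.Ico_disjoint_Ico_consecutive 0 a (a+b))


theorem errCount_periodic {V : Type*} (lab : V → V → Bool) (c' : ℕ → V) (l : ℕ)
    (hper : ∀ j, lab (c' (j+l)) (c' (j+l+1)) = lab (c' j) (c' (j+1))) :
    ∀ k, errCount lab c' (k*l) = k * errCount lab c' l := by
  have hper' : ∀ k j, lab (c' (j + k*l)) (c' (j + k*l + 1)) = lab (c' j) (c' (j+1)) := by
    intro k
    induction k with
    | zero => simp
    | succ k ih =>
      intro j
      have : j + (k+1)*l = (j + k*l) + l := by ring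
      rw [this, hper, ih]
  intro k
  induction k with
  | zero => simp [errCount]
  | succ k ih =>
    have h1 : (k+1)*l = k*l + l := by ring
    rw [h1, errCount_add_s2, ih]
    have : ∀ i, lab (c' (k*l + i)) (c' (k*l + i + 1)) = lab (c' i) (c' (i+1)) := by
      intro i; rw [Nat.add_comm (k*l) i, hper' k i]
    have he : ((Finset.range l).filter (fun i => lab (c' (k*l + i)) (c' (k*l + i + 1)) = true)).card
        = errCount lab c' l := by
      unfold errCount; congr 1; apply Finset.filter_congr; intro i _; rw [this i]
    rw [he]; ring

theorem stmt2 {V : Type*} [Fintype V]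
    (A : V → V → Prop) (lab : V → V → Bool)
    (hsc : ∀ u v : V, ∃ (m : ℕ) (s : ℕ → V), IsWalk A s m ∧ s 0 = u ∧ s m = v)
    (c : ℕ → V) (l e : ℕ) (hc : IsCycle A c l) (he : errCount lab c l = e)
    (τ : ℝ) (hτ : τ = (e : ℝ) / l)
    (hub : ∀ (s : ℕ → V) (l' : ℕ), IsCycle A s l' → (errCount lab s l' : ℝ) ≤ τ * l')
    (s₀ : V) (n : ℕ) :
    ∃ s : ℕ → V, IsWalk A s n ∧ s 0 = s₀ ∧
      τ * n - l - Fintype.card V < (errCount lab s n : ℝ) := by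
  obtain ⟨lpos, hcw, hcc, -⟩ := hc
  -- extended cycle
  set c' : ℕ → V := fun j => c (j % l) with hc'
  have hmod : ∀ j, c' (j + 1) = c' (j % l + 1) := by
    intro j
    show c ((j+1) % l) = c ((j % l + 1) % l)
    rw [Nat.mod_add_mod]
  have hc'walk : ∀ j, A (c' j) (c' (j + 1)) := by
    intro j
    rw [hmod j]
    have hr : j % l < l := Nat.mod_lt j lpos
    show A (c (j % l)) (c ((j % l + 1) % l))
    by_cases h : j % l + 1 < l
    · rw [Nat.mod_eq_of_lt h]; exact hcw _ hr
    · have h' : j % l + 1 = l := by omega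
      have h2 := hcw _ hr
      rw [h', hcc] at h2
      rw [h', Nat.mod_self]
      exact h2
  have hper : ∀ j, lab (c' (j+l)) (c' (j+l+1)) = lab (c' j) (c' (j+1)) := by
    intro j
    have h1 : c' (j + l) = c' j := by show c ((j+l) % l) = c (j % l); rw [Nat.add_mod_right]
    rw [hmod (j+l), hmod j, h1]
    congr 2
    rw [Nat.add_mod_right]
  have hc'e : errCount lab c' l = e := by
    rw [← he]; unfold errCount; congr 1
    apply Finset.filter_congr
    intro i hi
    rw [Finset.mem_range] at hi
    have h1 : c' i = c i := by show c (i % l) = c i; rw [Nat.mod_eq_of_lt hi]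
    have h2 : c' (i + 1) = c (i + 1) := by
      show c ((i+1) % l) = c (i+1)
      by_cases h : i + 1 < l
      · rw [Nat.mod_eq_of_lt h]
      · have h' : i + 1 = l := by omega
        rw [h', Nat.mod_self, hcc]
    rw [h1, h2]
  -- prefix walk
  obtain ⟨m₀, w, hww⟩ := hsc s₀ (c 0)
  obtain ⟨m, p, hmV, hpw, hp0, hpm⟩ := shorten_walk A m₀ s₀ (c 0) ⟨w, hww⟩
  set s : ℕ → V := fun i => if i ≤ m then p i else c' (i - m) with hs
  have hext : ∀ i, s (m + i) = c' i := by
    intro i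
    rcases Nat.eq_zero_or_pos i with h | h
    · subst h; show s m = c' 0
      have : c' 0 = c 0 := by show c (0 % l) = c 0; rw [Nat.zero_mod]
      simp [hs, hpm, this]
    · show s (m + i) = c' i
      simp only [hs]
      rw [if_neg (by omega)]
      congr 1; omega
  have hswalk : IsWalk A s n := by
    intro i _
    rcases lt_or_ge i m with h | h
    · have e1 : s i = p i := by simp [hs, le_of_lt h]
      have e2 : s (i+1) = p (i+1) := by simp [hs]; omega
      rw [e1, e2]; exact hpw i h
    · have e1 : s i = c' (i - m) := by
        have := hext (i - m); rwa [show m + (i - m) = i by omega] at this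
      have e2 : s (i+1) = c' (i - m + 1) := by
        have := hext (i - m + 1); rwa [show m + (i - m + 1) = i + 1 by omega] at this
      rw [e1, e2]; exact hc'walk _
  have hs0 : s 0 = s₀ := by simp [hs, hp0]
  refine ⟨s, hswalk, hs0, ?_⟩
  -- basic facts
  have hel : e ≤ l := by
    rw [← he]; unfold errCount
    calc _ ≤ (Finset.range l).card := Finset.card_filter_le _ _
    _ = l := Finset.card_range _
  have hlR : (0:ℝ) < l := by exact_mod_cast lpos
  have hτ0 : 0 ≤ τ := by rw [hτ]; positivity
  have hτ1 : τ ≤ 1 := by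
    rw [hτ, div_le_one hlR]; exact_mod_cast hel
  have hcard1 : (1:ℕ) ≤ Fintype.card V := Fintype.card_pos_iff.mpr ⟨s₀⟩
  rcases le_or_gt n m with hnm | hnm
  · -- trivial case
    have : τ * n ≤ n := by nlinarith [Nat.cast_nonneg (α := ℝ) n]
    have hn : (n:ℝ) < Fintype.card V := by exact_mod_cast lt_of_le_of_lt hnm hmV
    have h0 : (0:ℝ) ≤ errCount lab s n := Nat.cast_nonneg _
    nlinarith
  · set k := (n - m) / l with hk
    have hk1 : k * l ≤ n - m := Nat.div_mul_le_self _ _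
    have hk2 : n - m < (k + 1) * l := by
      have h1 := Nat.div_add_mod (n - m) l
      have h2 := Nat.mod_lt (n - m) lpos
      have h3 : (k+1)*l = l * k + l := by ring
      rw [h3, hk]
      omega
    -- errCount lab s n ≥ k * e
    have hcount : k * e ≤ errCount lab s n := by
      have h1 : k * e = errCount lab c' (k * l) := by
        rw [errCount_periodic lab c' l hper k, hc'e]
      have h2 : errCount lab c' (k * l)
          = ((Finset.Ico m (m + k*l)).filter (fun i => lab (s i) (s (i+1)) = true)).card := by
        rw [filter_Ico_shift m (k*l) (fun i => lab (s i) (s (i+1)) = true)]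
        unfold errCount; congr 1
        apply Finset.filter_congr
        intro i _
        rw [hext i, show m + i + 1 = m + (i + 1) by omega, hext (i+1)]
      rw [h1, h2]
      unfold errCount
      apply Finset.card_le_card
      apply Finset.filter_subset_filter
      intro x hx
      rw [Finset.mem_Ico] at hx
      rw [Finset.mem_range]
      omega
    -- real arithmetic
    have hkR : ((n:ℝ) - m) / l - 1 < k := by
      rw [div_sub_one hlR.ne', div_lt_iff₀ hlR]
      have : (n:ℝ) - m < (k+1) * l := by
        have : ((n - m : ℕ) : ℝ) < ((k+1) * l : ℕ) := by exact_mod_cast hk2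
        push_cast at this
        rw [Nat.cast_sub (le_of_lt hnm)] at this
        linarith
      linarith
    have hτl : τ * l = e := by rw [hτ]; field_simp
    have hcR : (k * e : ℝ) ≤ errCount lab s n := by exact_mod_cast hcount
    have hmR : (m:ℝ) < Fintype.card V := by exact_mod_cast hmV
    have heR : (e:ℝ) ≤ l := by exact_mod_cast hel
    have hτm : τ * m < Fintype.card V := by
      nlinarith [Nat.cast_nonneg (α := ℝ) m]
    -- τ * n - l - |V| < τ*n - τ*m - e ≤ ((n-m)/l - 1) * τ * l ≤ k * e ≤ count
    have h3 : τ * n - τ * m - (e:ℝ) ≤ (k:ℝ) * e := by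
      rcases Nat.eq_zero_or_pos e with he0 | he0
      · have : τ = 0 := by rw [hτ, he0]; simp
        simp [this, he0]
      · have heP : (0:ℝ) < e := by exact_mod_cast he0
        have : (((n:ℝ) - m) / l - 1) * e ≤ (k:ℝ) * e := by nlinarith
        calc τ * n - τ * m - (e:ℝ) = (((n:ℝ) - m) / l - 1) * e := by
              rw [hτ]; field_simp
        _ ≤ _ := this
    nlinarith
end

section
/- For a finite-state additive noise channel over an alphabet of size q whose noise is governed by a strongly connected finite-state machine with Perron eigenvalue λ (topological entropy h_ch = log_q λ), the zero-error feedback capacity satisfies C_{0f} ≤ 1 − log_q λ. -/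
/-!
A zero-error feedback code of length `L` with `M` messages gives an injection
`(m, v) ↦ out m v` from messages × admissible noise words into `X^L`: the message is determined
by zero-error decoding, and then the noise, because the encoder only sees past outputs. Hence
`M · |W_L| ≤ q^L`, where `W_L` is the set of admissible noise words of length `L`. Cutting a walk
of length `kL` into `k` blocks shows `α λ^{kL} ≤ |W_L|^k` for every `k`, so `λ^L ≤ |W_L|`, and
therefore `M λ^L ≤ q^L`, i.e. `log_q M / L ≤ 1 - log_q λ`.
-/

open Filter Topology

theorem le_of_forall_mul_pow_le {a b c : ℝ} (hc : 0 < c) (hb : 0 ≤ b)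
    (h : ∀ k : ℕ, c * a ^ k ≤ b ^ k) : a ≤ b := by
  by_contra! hba
  have ha : 0 < a := hb.trans_lt hba
  have hlim : Tendsto (fun k : ℕ => (b / a) ^ k) atTop (𝓝 0) :=
    tendsto_pow_atTop_nhds_zero_of_lt_one (div_nonneg hb ha.le) ((div_lt_one ha).2 hba)
  obtain ⟨k, hk⟩ := (hlim.eventually (gt_mem_nhds hc)).exists
  rw [div_pow, div_lt_iff₀ (pow_pos ha k)] at hk
  linarith [h k]

theorem logb_div_le_one_sub_logb {q M lam : ℝ} {L : ℕ} (hq : 1 < q) (hM : 0 < M)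
    (hlam : 0 < lam) (hL : 0 < L) (h : M * lam ^ L ≤ q ^ L) :
    Real.logb q M / L ≤ 1 - Real.logb q lam := by
  have hlog := Real.logb_le_logb_of_le hq (by positivity) h
  rw [Real.logb_mul hM.ne' (by positivity), Real.logb_pow, Real.logb_pow,
    Real.logb_self_eq_one hq] at hlog
  rw [div_le_iff₀ (by positivity)]
  linarith

section AdmissibleWords

variable {X S : Type*} (T : S → X → S → Prop)

/-- Labels of the length-`n` walks from `s`, where `T s x s'` is an edge `s → s'` labelled `x`. -/
def admissibleWords (s : S) (n : ℕ) : Set (Fin n → X) :=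
  {v | ∃ σ : Fin (n + 1) → S, σ 0 = s ∧ ∀ i : Fin n, T (σ i.castSucc) (v i) (σ i.succ)}

variable {T}

theorem block_mem_admissibleWords {s : S} {k L : ℕ} {v : Fin (k * L) → X}
    (hv : v ∈ admissibleWords T s (k * L)) (j : Fin k) :
    ∃ s', (fun i : Fin L => v (finProdFinEquiv (j, i))) ∈ admissibleWords T s' L := by
  obtain ⟨σ, -, hσ⟩ := hv
  have hlt : ∀ i : Fin (L + 1), i.val + L * j.val < k * L + 1 := by
    intro i
    have := Nat.mul_le_mul_left L j.isLt
    have := i.isLt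
    nlinarith
  refine ⟨σ ⟨L * j.val, by simpa using hlt 0⟩, fun i => σ ⟨i.val + L * j.val, hlt i⟩,
    by simp, fun i => ?_⟩
  convert hσ (finProdFinEquiv (j, i)) using 2 <;> ext <;> simp [finProdFinEquiv, add_right_comm]

theorem card_admissibleWords_mul_le [Finite X] (s : S) (k L : ℕ) :
    Nat.card (admissibleWords T s (k * L)) ≤ Nat.card (⋃ s', admissibleWords T s' L) ^ k := by
  let blocks : admissibleWords T s (k * L) → Fin k → ⋃ s', admissibleWords T s' L :=
    fun v j => ⟨_, Set.mem_iUnion.2 (block_mem_admissibleWords v.2 j)⟩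
  have hblocks : Function.Injective blocks := by
    intro v w h
    ext t
    obtain ⟨⟨j, i⟩, rfl⟩ := finProdFinEquiv.surjective t
    exact congrFun (congrArg Subtype.val (congrFun h j)) i
  simpa [Nat.card_fun] using Nat.card_le_card_of_injective blocks hblocks

theorem pow_le_card_iUnion_admissibleWords [Finite X] {α lam : ℝ} {s : S} (hα : 0 < α)
    (hsize : ∀ n, α * lam ^ n ≤ Nat.card (admissibleWords T s n)) (L : ℕ) :
    lam ^ L ≤ Nat.card (⋃ s', admissibleWords T s' L) :=
  le_of_forall_mul_pow_le hα (Nat.cast_nonneg _) fun k => calc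
    α * (lam ^ L) ^ k = α * lam ^ (k * L) := by rw [← pow_mul, mul_comm L]
    _ ≤ Nat.card (admissibleWords T s (k * L)) := hsize _
    _ ≤ (Nat.card (⋃ s', admissibleWords T s' L) : ℝ) ^ k := by
      exact_mod_cast card_admissibleWords_mul_le s k L

end AdmissibleWords

section FeedbackCode

variable {X : Type*} [AddGroup X] {L M : ℕ} {enc : Fin M → (t : ℕ) → (Fin t → X) → X}
  {out : Fin M → (Fin L → X) → Fin L → X}

theorem feedback_output_injective
    (hrec : ∀ (m : Fin M) (v : Fin L → X) (t : Fin L),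
      out m v t = enc m t.val (fun i : Fin t.val => out m v ⟨i.val, lt_trans i.isLt t.isLt⟩) + v t)
    (m : Fin M) : Function.Injective (out m) := by
  intro v v' h
  funext t
  have hv := hrec m v t
  have hv' := hrec m v' t
  rw [h] at hv
  exact add_left_cancel (hv.symm.trans hv')

theorem card_mul_card_le_of_zeroError [Finite X] {W : Set (Fin L → X)}
    (hrec : ∀ (m : Fin M) (v : Fin L → X) (t : Fin L),
      out m v t = enc m t.val (fun i : Fin t.val => out m v ⟨i.val, lt_trans i.isLt t.isLt⟩) + v t)
    (hdec : ∀ m m' : Fin M, m ≠ m' → ∀ v ∈ W, ∀ v' ∈ W, out m v ≠ out m' v') :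
    M * Nat.card W ≤ Nat.card X ^ L := by
  let output : Fin M × W → Fin L → X := fun p => out p.1 p.2
  have houtput : Function.Injective output := by
    rintro ⟨m, v, hv⟩ ⟨m', v', hv'⟩ h
    obtain rfl : m = m' := by
      by_contra hne
      exact hdec m m' hne v hv v' hv' h
    obtain rfl := feedback_output_injective hrec m h
    rfl
  simpa [Nat.card_prod, Nat.card_fun] using Nat.card_le_card_of_injective output houtput

end FeedbackCode

theorem stmt8_general {X S : Type*} [Fintype X] [AddGroup X]
    (q : ℕ) (hq : 2 ≤ q) (hcard : Fintype.card X = q)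
    (T : S → X → S → Prop)
    (𝒱 : S → (n : ℕ) → Set (Fin n → X))
    (h𝒱 : ∀ (s : S) (n : ℕ), 𝒱 s n = {v | ∃ σ : Fin (n + 1) → S, σ 0 = s ∧
        ∀ i : Fin n, T (σ i.castSucc) (v i) (σ i.succ)})
    (lam α : ℝ) (hα : 0 < α) (hlam : 1 ≤ lam)
    (hsize : ∀ (s : S) (n : ℕ), α * lam ^ n ≤ (Nat.card (𝒱 s n) : ℝ))
    (C0f : ℝ)
    (hC0f : IsLUB {r : ℝ | ∃ (n M : ℕ), 0 < M ∧
      ∃ (enc : Fin M → (t : ℕ) → (Fin t → X) → X)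
        (out : Fin M → (Fin (n + 1) → X) → Fin (n + 1) → X),
        (∀ (m : Fin M) (v : Fin (n + 1) → X) (t : Fin (n + 1)),
          out m v t = enc m t.val
            (fun i : Fin t.val => out m v ⟨i.val, lt_trans i.isLt t.isLt⟩) + v t) ∧
        (∀ m m' : Fin M, m ≠ m' → ∀ (s s' : S) (v v' : Fin (n + 1) → X),
          v ∈ 𝒱 s (n + 1) → v' ∈ 𝒱 s' (n + 1) → out m v ≠ out m' v') ∧
        r = Real.logb q M / (n + 1)} C0f) :
    C0f ≤ 1 - Real.logb q lam := by
  obtain rfl : 𝒱 = admissibleWords T := funext fun s => funext (h𝒱 s)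
  have hq1 : (1 : ℝ) < q := by exact_mod_cast hq
  rcases isEmpty_or_nonempty S with hS | ⟨⟨s₀⟩⟩
  · -- no noise word is admissible, so zero-error decoding is vacuous and every rate is achievable
    obtain ⟨K, hK⟩ := exists_nat_gt C0f
    refine absurd (hC0f.1 ⟨0, q ^ K, by positivity, fun _ _ _ => 0, fun _ v => v,
      fun _ _ _ => (zero_add _).symm, fun _ _ _ s => isEmptyElim s, ?_⟩) hK.not_ge
    rw [Nat.cast_pow, Real.logb_pow, Real.logb_self_eq_one hq1]
    simp
  refine hC0f.2 ?_
  rintro _ ⟨n, M, hM, enc, out, hrec, hdec, rfl⟩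
  set W := ⋃ s, admissibleWords T s (n + 1)
  have hcode : M * Nat.card W ≤ q ^ (n + 1) := by
    rw [← hcard, ← Nat.card_eq_fintype_card]
    refine card_mul_card_le_of_zeroError hrec fun m m' hne v hv v' hv' => ?_
    obtain ⟨s, hv⟩ := Set.mem_iUnion.1 hv
    obtain ⟨s', hv'⟩ := Set.mem_iUnion.1 hv'
    exact hdec m m' hne s s' v v' hv hv'
  have hgrowth : lam ^ (n + 1) ≤ Nat.card W :=
    pow_le_card_iUnion_admissibleWords hα (hsize s₀) (n + 1)
  have hbound : (M : ℝ) * lam ^ (n + 1) ≤ (q : ℝ) ^ (n + 1) := calc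
    (M : ℝ) * lam ^ (n + 1) ≤ M * Nat.card W := by gcongr
    _ ≤ (q : ℝ) ^ (n + 1) := by exact_mod_cast hcode
  exact_mod_cast logb_div_le_one_sub_logb hq1 (by exact_mod_cast hM) (by linarith)
    n.succ_pos hbound

/-- The zero-error feedback capacity of a finite-state additive noise channel whose noise
is governed by a strongly connected finite-state machine with Perron eigenvalue `lam`
satisfies `C₀f ≤ 1 - log_q lam`. -/
theorem stmt8 {X S : Type*} [Fintype X] [AddGroup X] [Fintype S]
    (q : ℕ) (hq : 2 ≤ q) (hcard : Fintype.card X = q)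
    (T : S → X → S → Prop)
    (𝒱 : S → (n : ℕ) → Set (Fin n → X))
    (h𝒱 : ∀ (s : S) (n : ℕ), 𝒱 s n = {v | ∃ σ : Fin (n + 1) → S, σ 0 = s ∧
        ∀ i : Fin n, T (σ i.castSucc) (v i) (σ i.succ)})
    (lam α : ℝ) (hα : 0 < α) (hlam : 1 ≤ lam)
    (hsize : ∀ (s : S) (n : ℕ), α * lam ^ n ≤ (Nat.card (𝒱 s n) : ℝ))
    (C0f : ℝ)
    (hC0f : IsLUB {r : ℝ | ∃ (n M : ℕ), 0 < M ∧
      ∃ (enc : Fin M → (t : ℕ) → (Fin t → X) → X)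
        (out : Fin M → (Fin (n + 1) → X) → Fin (n + 1) → X),
        (∀ (m : Fin M) (v : Fin (n + 1) → X) (t : Fin (n + 1)),
          out m v t = enc m t.val
            (fun i : Fin t.val => out m v ⟨i.val, lt_trans i.isLt t.isLt⟩) + v t) ∧
        (∀ m m' : Fin M, m ≠ m' → ∀ (s s' : S) (v v' : Fin (n + 1) → X),
          v ∈ 𝒱 s (n + 1) → v' ∈ 𝒱 s' (n + 1) → out m v ≠ out m' v') ∧
        r = Real.logb q M / (n + 1)} C0f) :
    C0f ≤ 1 - Real.logb q lam :=
  stmt8_general q hq hcard T 𝒱 h𝒱 lam α hα hlam hsize C0f hC0f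
end

section
/- For a (w,d) sliding-window symmetric channel over a q-ary alphabet with d ≥ w/2, the zero-error capacity (and zero-error feedback capacity) is zero: for every blocklength n and every pair of distinct messages, there exist admissible error sequences making the two output sequences identical. -/
def altSeq {X : Type*} (e₁ e₂ : (t : ℕ) → (Fin t → X) → X) : ℕ → X
  | t => if t % 2 = 0 then e₁ t (fun j => altSeq e₁ e₂ j)
         else e₂ t (fun j => altSeq e₁ e₂ j)
decreasing_by all_goals exact j.isLt

lemma parityCount (r : ℕ) : ∀ (w i : ℕ),
    ((Finset.Ico i (i + w)).filter (fun t => t % 2 = r)).card ≤ (w + 1) / 2 := by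
  intro w
  induction w using Nat.twoStepInduction with
  | zero => intro i; simp
  | one =>
      intro i
      have : ((Finset.Ico i (i + 1)).filter (fun t => t % 2 = r)).card ≤ 1 := by
        apply Finset.card_le_one.mpr
        intro a ha b hb
        simp only [Finset.mem_filter, Finset.mem_Ico] at ha hb
        omega
      simpa using this
  | more w ih _ =>
      intro i
      have hsplit : Finset.Ico i (i + (w + 2)) =
          Finset.Ico i (i + w) ∪ Finset.Ico (i + w) (i + (w + 2)) := by
        rw [Finset.Ico_union_Ico_eq_Ico] <;> omega
      have h2 : ((Finset.Ico (i + w) (i + (w + 2))).filter (fun t => t % 2 = r)).card ≤ 1 := by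
        apply Finset.card_le_one.mpr
        intro a ha b hb
        simp only [Finset.mem_filter, Finset.mem_Ico] at ha hb
        omega
      calc ((Finset.Ico i (i + (w + 2))).filter (fun t => t % 2 = r)).card
          ≤ ((Finset.Ico i (i + w)).filter (fun t => t % 2 = r)).card +
            ((Finset.Ico (i + w) (i + (w + 2))).filter (fun t => t % 2 = r)).card := by
            rw [hsplit, Finset.filter_union]; exact Finset.card_union_le _ _
        _ ≤ (w + 1) / 2 + 1 := Nat.add_le_add (ih i) h2
        _ = (w + 2 + 1) / 2 := by omega

/-- For a `(w,d)` sliding-window symmetric channel with `d ≥ w/2`, the zero-error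
(feedback) capacity is zero: for any blocklength `n` and any two (feedback) encoders there
is a common output sequence `y` such that the induced error patterns of both encoders are
admissible (at most `d` errors in each window of `w` consecutive uses). -/
theorem stmt13 {X : Type*} [Fintype X] [DecidableEq X]
    (q w d : ℕ) (hq : 2 ≤ q) (hcard : Fintype.card X = q)
    (hw : 0 < w) (hd : w ≤ 2 * d)
    (n : ℕ) (enc₁ enc₂ : (t : ℕ) → (Fin t → X) → X) :
    ∃ y : ℕ → X,
      (∀ i : ℕ, i + w ≤ n →
        ((Finset.Ico i (i + w)).filter
          (fun t => y t ≠ enc₁ t (fun j : Fin t => y j))).card ≤ d) ∧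
      (∀ i : ℕ, i + w ≤ n →
        ((Finset.Ico i (i + w)).filter
          (fun t => y t ≠ enc₂ t (fun j : Fin t => y j))).card ≤ d) := by
  set y := altSeq enc₁ enc₂ with hy
  have hyeq : ∀ t, y t = if t % 2 = 0 then enc₁ t (fun j : Fin t => y j)
      else enc₂ t (fun j : Fin t => y j) := by
    intro t; rw [hy]; rw [altSeq]
  have hhalf : (w + 1) / 2 ≤ d := by omega
  refine ⟨y, fun i _ => ?_, fun i _ => ?_⟩
  · calc ((Finset.Ico i (i + w)).filter
          (fun t => y t ≠ enc₁ t (fun j : Fin t => y j))).card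
        ≤ ((Finset.Ico i (i + w)).filter (fun t => t % 2 = 1)).card := by
          apply Finset.card_le_card
          intro t ht
          simp only [Finset.mem_filter] at ht ⊢
          refine ⟨ht.1, ?_⟩
          by_contra h
          have h0 : t % 2 = 0 := by omega
          exact ht.2 (by rw [hyeq t, if_pos h0])
      _ ≤ (w + 1) / 2 := parityCount 1 w i
      _ ≤ d := hhalf
  · calc ((Finset.Ico i (i + w)).filter
          (fun t => y t ≠ enc₂ t (fun j : Fin t => y j))).card
        ≤ ((Finset.Ico i (i + w)).filter (fun t => t % 2 = 0)).card := by
          apply Finset.card_le_card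
          intro t ht
          simp only [Finset.mem_filter] at ht ⊢
          refine ⟨ht.1, ?_⟩
          by_contra h
          have h1 : ¬ t % 2 = 0 := h
          exact ht.2 (by rw [hyeq t, if_neg h1])
      _ ≤ (w + 1) / 2 := parityCount 0 w i
      _ ≤ d := hhalf
end

section
/- Let A be an irreducible adjacency matrix of a strongly connected finite-state erasure channel with Perron eigenvalue λ, maximal ratio τ, input alphabet size q, and state set S. Then for blocklength n, there exists a zero-error code of size M ≥ qⁿ / (ζ (q^τ λ)ⁿ) with ζ = q^{|S|} β |S|², where β is the Perron upper-bound constant; consequently C_0 ≥ 1 − τ − log_q λ. -/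
/-- Zero-error code size lower bound for a finite-state erasure channel, and the resulting
capacity bound `C₀ ≥ 1 − τ − log_q λ`. Noise sequences are erasure patterns generated by
walks in a strongly connected finite-state machine; `β` is the Perron constant bounding
the number of noise sequences by `β λⁿ`, and `τ` is the maximal ratio bounding the number
of erasures in any length-`n` noise sequence by `τ n + |S|`. -/
theorem stmt16 {S : Type*} [Fintype S] [Nonempty S]
    (q : ℕ) (hq : 2 ≤ q)
    (T : S → Bool → S → Prop)
    (𝒱 : S → (n : ℕ) → Set (Fin n → Bool))
    (h𝒱 : ∀ (s : S) (n : ℕ), 𝒱 s n = {v | ∃ σ : Fin (n + 1) → S, σ 0 = s ∧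
      ∀ i : Fin n, T (σ i.castSucc) (v i) (σ i.succ)})
    (lam β τ : ℝ) (hβ : 0 < β) (hlam : 1 ≤ lam) (hτ0 : 0 ≤ τ)
    (hcount : ∀ (s : S) (n : ℕ), (Nat.card (𝒱 s n) : ℝ) ≤ β * lam ^ n)
    (herase : ∀ (s : S) (n : ℕ), ∀ v ∈ 𝒱 s n,
      (((Finset.univ : Finset (Fin n)).filter (fun i => v i = true)).card : ℝ)
        ≤ τ * n + Fintype.card S)
    (Confusable : (n : ℕ) → (Fin n → Fin q) → (Fin n → Fin q) → Prop)
    (hConf : ∀ (n : ℕ) (x x' : Fin n → Fin q), Confusable n x x' ↔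
      ∃ (s s' : S) (v v' : Fin n → Bool), v ∈ 𝒱 s n ∧ v' ∈ 𝒱 s' n ∧
        ∀ t : Fin n, (if v t then none else some (x t)) =
          (if v' t then none else some (x' t)))
    (C0 : ℝ)
    (hC0 : IsLUB {r : ℝ | ∃ (n : ℕ) (𝒞 : Finset (Fin n → Fin q)), 0 < n ∧ 0 < 𝒞.card ∧
      (∀ x ∈ 𝒞, ∀ x' ∈ 𝒞, x ≠ x' → ¬ Confusable n x x') ∧
      r = Real.logb q 𝒞.card / n} C0) :
    (∀ n : ℕ, ∃ 𝒞 : Finset (Fin n → Fin q),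
      (∀ x ∈ 𝒞, ∀ x' ∈ 𝒞, x ≠ x' → ¬ Confusable n x x') ∧
      (q : ℝ) ^ n / ((q : ℝ) ^ (Fintype.card S) * β * ((Fintype.card S : ℝ)) ^ 2
        * ((q : ℝ) ^ τ * lam) ^ n) ≤ (𝒞.card : ℝ)) ∧
    1 - τ - Real.logb q lam ≤ C0 := by
  classical
  have hS : 0 < Fintype.card S := Fintype.card_pos
  have hSR : (1:ℝ) ≤ (Fintype.card S : ℝ) := by exact_mod_cast hS
  have hqR : (2:ℝ) ≤ (q:ℝ) := by exact_mod_cast hq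
  have hq1 : (1:ℝ) < (q:ℝ) := by linarith
  have hq0 : (0:ℝ) < (q:ℝ) := by linarith
  have hlam0 : (0:ℝ) < lam := by linarith
  have hqτ : (0:ℝ) < (q:ℝ) ^ τ := Real.rpow_pos_of_pos hq0 τ
  have hqτ1 : (1:ℝ) ≤ (q:ℝ) ^ τ := by
    have h := Real.rpow_le_rpow_of_exponent_le (le_of_lt hq1) hτ0
    simpa using h
  -- β ≥ 1, from the count at n = 0
  have hβ1 : (1:ℝ) ≤ β := by
    obtain ⟨s⟩ := (inferInstance : Nonempty S)
    have h0 := hcount s 0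
    have huniv : 𝒱 s 0 = Set.univ := by
      rw [h𝒱]
      ext v
      refine ⟨fun _ => trivial, fun _ => ⟨fun _ => s, rfl, fun i => i.elim0⟩⟩
    rw [huniv] at h0
    simpa using h0
  -- the denominator
  set ζ : ℝ := (q : ℝ) ^ (Fintype.card S) * β * ((Fintype.card S : ℝ)) ^ 2 with hζdef
  have hqS1 : (1:ℝ) ≤ (q:ℝ) ^ (Fintype.card S) := one_le_pow₀ (by linarith)
  have hS21 : (1:ℝ) ≤ ((Fintype.card S : ℝ)) ^ 2 := by nlinarith
  have hζ1 : (1:ℝ) ≤ ζ := by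
    have h1 : (1:ℝ) ≤ (q:ℝ) ^ (Fintype.card S) * β := by nlinarith
    nlinarith
  have hqτlam1 : (1:ℝ) ≤ (q:ℝ) ^ τ * lam := by nlinarith
  have hB1 : ∀ n : ℕ, (1:ℝ) ≤ ζ * ((q:ℝ) ^ τ * lam) ^ n := by
    intro n
    have h4 : (1:ℝ) ≤ ((q:ℝ) ^ τ * lam) ^ n := one_le_pow₀ hqτlam1
    nlinarith
  have hBpos : ∀ n : ℕ, (0:ℝ) < ζ * ((q:ℝ) ^ τ * lam) ^ n :=
    fun n => lt_of_lt_of_le one_pos (hB1 n)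
  -- main per-blocklength construction
  have main : ∀ n : ℕ, ∃ 𝒞 : Finset (Fin n → Fin q),
      (∀ x ∈ 𝒞, ∀ x' ∈ 𝒞, x ≠ x' → ¬ Confusable n x x') ∧
      (q : ℝ) ^ n / (ζ * ((q : ℝ) ^ τ * lam) ^ n) ≤ (𝒞.card : ℝ) := by
    intro n
    by_cases hA : ∃ s, (𝒱 s n).Nonempty
    · obtain ⟨s₁, v₁, hv₁⟩ := hA
      have hrefl : ∀ x : Fin n → Fin q, Confusable n x x := fun x =>
        (hConf n x x).mpr ⟨s₁, s₁, v₁, v₁, hv₁, hv₁, fun t => rfl⟩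
      have hsymm : ∀ x x' : Fin n → Fin q, Confusable n x x' → Confusable n x' x := by
        intro x x' h
        obtain ⟨s, s', v, v', hv, hv', heq⟩ := (hConf n x x').mp h
        exact (hConf n x' x).mpr ⟨s', s, v', v, hv', hv, fun t => (heq t).symm⟩
      -- erased-position counting sets
      set D : ℝ := (q:ℝ) ^ (Fintype.card S) * ((q:ℝ) ^ τ) ^ n with hDdef
      have hD0 : (0:ℝ) ≤ D := by positivity
      set Vs : S → Finset (Fin n → Bool) := fun s => (Set.toFinite (𝒱 s n)).toFinset with hVsdef
      have hVsc : ∀ s : S, ((Vs s).card : ℝ) ≤ β * lam ^ n := by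
        intro s
        have h := hcount s n
        rwa [Nat.card_coe_set_eq, Set.ncard_eq_toFinset_card _ (Set.toFinite _)] at h
      set Gf : (Fin n → Fin q) → (Fin n → Bool) → Finset (Fin n → Fin q) :=
        fun c v => Finset.univ.filter (fun x : Fin n → Fin q => ∀ t, v t = false → x t = c t)
          with hGfdef
      -- single-pattern preimage bound
      have hG : ∀ (c : Fin n → Fin q) (s : S), ∀ v ∈ Vs s, ((Gf c v).card : ℝ) ≤ D := by
        intro c s v hv
        have hvmem : v ∈ 𝒱 s n := (Set.Finite.mem_toFinset _).mp hv
        set k := (Finset.univ.filter (fun t : Fin n => v t = true)).card with hkdef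
        have hcard : (Gf c v).card ≤ q ^ k := by
          have hinj : Set.InjOn (fun (x : Fin n → Fin q) (t : {t : Fin n // v t = true}) => x t.1)
              (Gf c v) := by
            intro x hx y hy hxy
            funext t
            by_cases hvt : v t = true
            · exact congrFun hxy ⟨t, hvt⟩
            · have hf : v t = false := by simpa using hvt
              have hx' := (Finset.mem_filter.mp (Finset.mem_coe.mp hx)).2 t hf
              have hy' := (Finset.mem_filter.mp (Finset.mem_coe.mp hy)).2 t hf
              rw [hx', hy']
          have hle := Finset.card_le_card_of_injOn
            (fun (x : Fin n → Fin q) (t : {t : Fin n // v t = true}) => x t.1)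
            (fun x _ => Finset.mem_univ _) hinj
          have hcu : (Finset.univ : Finset ({t : Fin n // v t = true} → Fin q)).card = q ^ k := by
            rw [Finset.card_univ, Fintype.card_fun, Fintype.card_fin, Fintype.card_subtype]
          rw [hcu] at hle
          exact hle
        have hk := herase s n v hvmem
        have hstep : ((q:ℝ)) ^ (k : ℝ) ≤ ((q:ℝ)) ^ (τ * n + (Fintype.card S : ℝ)) :=
          Real.rpow_le_rpow_of_exponent_le (le_of_lt hq1) hk
        have heq : ((q:ℝ)) ^ (τ * n + (Fintype.card S : ℝ)) = D := by
          rw [Real.rpow_add hq0, hDdef]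
          rw [← Real.rpow_natCast ((q:ℝ) ^ τ) n, ← Real.rpow_mul (le_of_lt hq0) τ (n:ℝ)]
          rw [← Real.rpow_natCast (q:ℝ) (Fintype.card S)]
          ring
        calc ((Gf c v).card : ℝ) ≤ ((q ^ k : ℕ) : ℝ) := by exact_mod_cast hcard
          _ = ((q:ℝ)) ^ (k : ℝ) := by push_cast; rw [Real.rpow_natCast]
          _ ≤ ((q:ℝ)) ^ (τ * n + (Fintype.card S : ℝ)) := hstep
          _ = D := heq
      -- total confusability-set bound
      have key : ∀ c : Fin n → Fin q,
          ((Finset.univ.filter (fun x => Confusable n c x)).card : ℝ)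
            ≤ ζ * ((q:ℝ) ^ τ * lam) ^ n := by
        intro c
        have hsub : Finset.univ.filter (fun x => Confusable n c x) ⊆
            Finset.univ.biUnion (fun s : S => (Vs s).biUnion (Gf c)) := by
          intro x hx
          have hx' : Confusable n c x := (Finset.mem_filter.mp hx).2
          obtain ⟨s, s', v, v', hv, hv', heq⟩ := (hConf n c x).mp hx'
          refine Finset.mem_biUnion.mpr ⟨s, Finset.mem_univ _,
            Finset.mem_biUnion.mpr ⟨v, (Set.Finite.mem_toFinset _).mpr hv, ?_⟩⟩
          refine Finset.mem_filter.mpr ⟨Finset.mem_univ _, ?_⟩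
          intro t ht
          have h := heq t
          rw [ht] at h
          simp only [Bool.false_eq_true, if_false] at h
          cases hvt : v' t
          · rw [hvt] at h
            simp only [Bool.false_eq_true, if_false, Option.some.injEq] at h
            exact h.symm
          · rw [hvt] at h
            simp at h
        have hone : ∀ s : S, (∑ v ∈ Vs s, ((Gf c v).card : ℝ)) ≤ (β * lam ^ n) * D := by
          intro s
          calc (∑ v ∈ Vs s, ((Gf c v).card : ℝ)) ≤ ∑ _v ∈ Vs s, D :=
                Finset.sum_le_sum (fun v hv => hG c s v hv)
            _ = ((Vs s).card : ℝ) * D := by rw [Finset.sum_const, nsmul_eq_mul]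
            _ ≤ (β * lam ^ n) * D := mul_le_mul_of_nonneg_right (hVsc s) hD0
        have hlamn : (0:ℝ) ≤ lam ^ n := by positivity
        have hfinal : (Fintype.card S : ℝ) * ((β * lam ^ n) * D) ≤ ζ * ((q:ℝ) ^ τ * lam) ^ n := by
          have hBeq : ζ * ((q:ℝ) ^ τ * lam) ^ n
              = ((Fintype.card S : ℝ)) ^ 2 * ((β * lam ^ n) * D) := by
            rw [hζdef, hDdef, mul_pow]; ring
          rw [hBeq]
          have h2 : (Fintype.card S : ℝ) ≤ ((Fintype.card S : ℝ)) ^ 2 := by nlinarith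
          have h3 : (0:ℝ) ≤ (β * lam ^ n) * D := by
            apply mul_nonneg (mul_nonneg (le_of_lt hβ) hlamn) hD0
          exact mul_le_mul_of_nonneg_right h2 h3
        calc ((Finset.univ.filter (fun x => Confusable n c x)).card : ℝ)
            ≤ ((Finset.univ.biUnion (fun s : S => (Vs s).biUnion (Gf c))).card : ℝ) := by
              exact_mod_cast Finset.card_le_card hsub
          _ ≤ ∑ s : S, (((Vs s).biUnion (Gf c)).card : ℝ) := by
              exact_mod_cast Finset.card_biUnion_le
          _ ≤ ∑ s : S, ∑ v ∈ Vs s, ((Gf c v).card : ℝ) :=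
              Finset.sum_le_sum (fun s _ => by exact_mod_cast Finset.card_biUnion_le)
          _ ≤ ∑ _s : S, (β * lam ^ n) * D := Finset.sum_le_sum (fun s _ => hone s)
          _ = (Fintype.card S : ℝ) * ((β * lam ^ n) * D) := by
              rw [Finset.sum_const, nsmul_eq_mul, Finset.card_univ]
          _ ≤ ζ * ((q:ℝ) ^ τ * lam) ^ n := hfinal
      -- greedy maximal code
      set P : Finset (Fin n → Fin q) → Prop :=
        fun 𝒞 => ∀ x ∈ 𝒞, ∀ x' ∈ 𝒞, x ≠ x' → ¬ Confusable n x x' with hPdef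
      have hnonempty : ((Finset.univ : Finset (Finset (Fin n → Fin q))).filter P).Nonempty :=
        ⟨∅, Finset.mem_filter.mpr ⟨Finset.mem_univ _, fun x hx => absurd hx (Finset.notMem_empty x)⟩⟩
      obtain ⟨𝒞, h𝒞mem, h𝒞max⟩ := Finset.exists_max_image
        ((Finset.univ : Finset (Finset (Fin n → Fin q))).filter P) Finset.card hnonempty
      have hP : P 𝒞 := (Finset.mem_filter.mp h𝒞mem).2
      refine ⟨𝒞, hP, ?_⟩
      have hcover : (Finset.univ : Finset (Fin n → Fin q)) ⊆
          𝒞.biUnion (fun c => Finset.univ.filter (fun x => Confusable n c x)) := by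
        intro x _
        rw [Finset.mem_biUnion]
        by_cases hx : x ∈ 𝒞
        · exact ⟨x, hx, Finset.mem_filter.mpr ⟨Finset.mem_univ _, hrefl x⟩⟩
        · by_contra hcon
          push_neg at hcon
          have hcon' : ∀ c ∈ 𝒞, ¬ Confusable n c x := by
            intro c hc hcf
            exact hcon c hc (Finset.mem_filter.mpr ⟨Finset.mem_univ _, hcf⟩)
          have hPx : P (insert x 𝒞) := by
            intro a ha b hb hab
            rcases Finset.mem_insert.mp ha with rfl | ha'
            · rcases Finset.mem_insert.mp hb with rfl | hb'
              · exact absurd rfl hab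
              · intro hcf
                exact hcon' b hb' (hsymm _ _ hcf)
            · rcases Finset.mem_insert.mp hb with rfl | hb'
              · intro hcf
                exact hcon' a ha' hcf
              · exact hP a ha' b hb' hab
          have hle := h𝒞max (insert x 𝒞) (Finset.mem_filter.mpr ⟨Finset.mem_univ _, hPx⟩)
          rw [Finset.card_insert_of_notMem hx] at hle
          omega
      have hsum : ((q:ℝ)) ^ n ≤ (𝒞.card : ℝ) * (ζ * ((q:ℝ) ^ τ * lam) ^ n) := by
        have h1 : (Finset.univ : Finset (Fin n → Fin q)).card ≤
            (𝒞.biUnion (fun c => Finset.univ.filter (fun x => Confusable n c x))).card :=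
          Finset.card_le_card hcover
        have huniv : ((Finset.univ : Finset (Fin n → Fin q)).card : ℝ) = (q:ℝ) ^ n := by
          rw [Finset.card_univ, Fintype.card_fun, Fintype.card_fin, Fintype.card_fin]
          push_cast; ring
        calc ((q:ℝ)) ^ n
            = ((Finset.univ : Finset (Fin n → Fin q)).card : ℝ) := huniv.symm
          _ ≤ ((𝒞.biUnion (fun c => Finset.univ.filter (fun x => Confusable n c x))).card : ℝ) := by
              exact_mod_cast h1
          _ ≤ ∑ c ∈ 𝒞, ((Finset.univ.filter (fun x => Confusable n c x)).card : ℝ) := by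
              exact_mod_cast Finset.card_biUnion_le
          _ ≤ ∑ _c ∈ 𝒞, ζ * ((q:ℝ) ^ τ * lam) ^ n := Finset.sum_le_sum (fun c _ => key c)
          _ = (𝒞.card : ℝ) * (ζ * ((q:ℝ) ^ τ * lam) ^ n) := by
              rw [Finset.sum_const, nsmul_eq_mul]
      rw [div_le_iff₀ (hBpos n)]
      exact hsum
    · -- no valid noise sequence of length n: no confusability at all
      refine ⟨Finset.univ, ?_, ?_⟩
      · intro x _ x' _ _ hcf
        obtain ⟨s, s', v, v', hv, _, _⟩ := (hConf n x x').mp hcf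
        exact hA ⟨s, v, hv⟩
      · have huniv : ((Finset.univ : Finset (Fin n → Fin q)).card : ℝ) = (q:ℝ) ^ n := by
          rw [Finset.card_univ, Fintype.card_fun, Fintype.card_fin, Fintype.card_fin]
          push_cast; ring
        rw [huniv]
        exact div_le_self (by positivity) (hB1 n)
  refine ⟨main, ?_⟩
  -- capacity bound
  set L : ℝ := Real.logb q lam with hLdef
  set Z : ℝ := Real.logb q ζ with hZdef
  have hZ0 : 0 ≤ Z := Real.logb_nonneg hq1 hζ1
  have hbound : ∀ n : ℕ, 0 < n → 1 - τ - L - Z / n ≤ C0 := by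
    intro n hn
    obtain ⟨𝒞, hpair, hsize⟩ := main n
    have hBp := hBpos n
    have hqn : (0:ℝ) < (q:ℝ) ^ n := by positivity
    have hcpos : (0:ℝ) < (𝒞.card : ℝ) := lt_of_lt_of_le (div_pos hqn hBp) hsize
    have hcnat : 0 < 𝒞.card := by exact_mod_cast hcpos
    have hmem : Real.logb q 𝒞.card / n ∈ {r : ℝ | ∃ (n : ℕ) (𝒞 : Finset (Fin n → Fin q)),
        0 < n ∧ 0 < 𝒞.card ∧ (∀ x ∈ 𝒞, ∀ x' ∈ 𝒞, x ≠ x' → ¬ Confusable n x x') ∧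
        r = Real.logb q 𝒞.card / n} := ⟨n, 𝒞, hn, hcnat, hpair, rfl⟩
    have hle := hC0.1 hmem
    -- compute the logarithms
    have hnR : (0:ℝ) < (n:ℝ) := by exact_mod_cast hn
    have hlog1 : Real.logb q ((q:ℝ) ^ n / (ζ * ((q:ℝ) ^ τ * lam) ^ n)) ≤ Real.logb q 𝒞.card :=
      Real.logb_le_logb_of_le hq1 (div_pos hqn hBp) hsize
    have hζ0 : (0:ℝ) < ζ := lt_of_lt_of_le one_pos hζ1
    have hval : Real.logb q ((q:ℝ) ^ n / (ζ * ((q:ℝ) ^ τ * lam) ^ n))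
        = (n:ℝ) - (Z + (n:ℝ) * (τ + L)) := by
      rw [Real.logb_div (by positivity) (by positivity), Real.logb_mul (ne_of_gt hζ0)
        (by positivity), Real.logb_pow, Real.logb_pow,
        Real.logb_mul (ne_of_gt hqτ) (ne_of_gt hlam0), Real.logb_rpow hq0 (ne_of_gt hq1),
        Real.logb_self_eq_one hq1]
      ring
    have hlog2 : ((n:ℝ) - (Z + (n:ℝ) * (τ + L))) / n ≤ Real.logb q 𝒞.card / n :=
      (div_le_div_iff_of_pos_right hnR).mpr (hval ▸ hlog1)
    have heq2 : ((n:ℝ) - (Z + (n:ℝ) * (τ + L))) / n = 1 - τ - L - Z / n := by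
      field_simp
      ring
    linarith [heq2 ▸ hlog2]
  -- take n → ∞
  refine le_of_forall_pos_le_add ?_
  intro ε hε
  obtain ⟨n, hn⟩ := exists_nat_gt (Z / ε)
  have hZε : 0 ≤ Z / ε := div_nonneg hZ0 (le_of_lt hε)
  have hnR : (0:ℝ) < (n:ℝ) := lt_of_le_of_lt hZε hn
  have hn0 : 0 < n := by exact_mod_cast hnR
  have h1 := hbound n hn0
  have h2 : Z / n ≤ ε := by
    rw [div_le_iff₀ hnR]
    have := (div_lt_iff₀ hε).mp hn
    nlinarith
  linarith
end

section
/- For a finite-state additive noise channel over an alphabet of size q with strongly connected state graph having Perron eigenvalue λ and state set S: for each codeword c of length n, the set of inputs confusable with c has size at most (β|S|λⁿ)², where β is the Perron constant with |𝒱(s₀,n)| ≤ βλⁿ; hence by the greedy covering argument the zero-error capacity satisfies C_0 ≥ 1 − 2 log_q λ. -/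
/-!
Confusability only sees the union `V` of the noise sets over all initial states, and every word
confusable with `c` is of the form `c + v - v'` with `v, v' ∈ V`, so there are at most
`|V|² ≤ (β |S| λⁿ)²` of them. A maximal code without confusable pairs is covered by its codewords
together with their confusability sets, so it has at least `qⁿ / (1 + (β |S| λⁿ)²)` codewords, and
the rates of these codes tend to at least `1 - 2 log_q λ`.
-/

open Set Filter Topology

section Confusability

variable {G : Type*} [AddGroup G]

def Confusable (V : Set G) (c x : G) : Prop :=
  ∃ v ∈ V, ∃ v' ∈ V, c + v = x + v'

instance (V : Set G) : Std.Symm (Confusable V) where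
  symm _ _ := fun ⟨v, hv, v', hv', h⟩ => ⟨v', hv', v, hv, h.symm⟩

theorem confusable_iUnion {S : Type*} (V : S → Set G) (c x : G) :
    Confusable (⋃ s, V s) c x ↔ ∃ s s', ∃ v ∈ V s, ∃ v' ∈ V s', c + v = x + v' := by
  simp only [Confusable, mem_iUnion]
  aesop

theorem ncard_setOf_confusable_le {V : Set G} (hV : V.Finite) (c : G) :
    {x | Confusable V c x}.ncard ≤ V.ncard ^ 2 := by
  have hsub : {x | Confusable V c x} ⊆ (fun p : G × G => c + p.1 - p.2) '' V ×ˢ V := by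
    rintro x ⟨v, hv, v', hv', h⟩
    exact ⟨(v, v'), ⟨hv, hv'⟩, (eq_sub_of_add_eq h.symm).symm⟩
  calc {x | Confusable V c x}.ncard
      ≤ ((fun p : G × G => c + p.1 - p.2) '' V ×ˢ V).ncard :=
        ncard_le_ncard hsub ((hV.prod hV).image _)
    _ ≤ (V ×ˢ V).ncard := ncard_image_le (hV.prod hV)
    _ = V.ncard ^ 2 := by rw [ncard_prod, sq]

end Confusability

theorem ncard_iUnion_le_card_mul {ι α : Type*} [Fintype ι] (s : ι → Set α) {B : ℝ}
    (h : ∀ i, ((s i).ncard : ℝ) ≤ B) : ((⋃ i, s i).ncard : ℝ) ≤ Fintype.card ι * B :=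
  calc ((⋃ i, s i).ncard : ℝ) ≤ ∑ i, ((s i).ncard : ℝ) := by
        exact_mod_cast ncard_iUnion_le_of_fintype s
    _ ≤ ∑ _i : ι, B := Finset.sum_le_sum fun i _ => h i
    _ = Fintype.card ι * B := by rw [Finset.sum_const, Finset.card_univ, nsmul_eq_mul]

theorem exists_pairwise_not_card_le_mul {α : Type*} [Fintype α] {R : α → α → Prop} [Std.Symm R]
    {K : ℝ} (hK : ∀ x, ({y | R x y}.ncard : ℝ) ≤ K) :
    ∃ C : Finset α, (C : Set α).Pairwise (fun x y => ¬ R x y) ∧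
      (Fintype.card α : ℝ) ≤ C.card * (1 + K) := by
  classical
  obtain ⟨C, hCmem, hCmax⟩ := Finset.exists_max_image
    (Finset.univ.filter fun C : Finset α => (C : Set α).Pairwise fun x y => ¬ R x y)
    Finset.card ⟨∅, by simp⟩
  have hC : (C : Set α).Pairwise fun x y => ¬ R x y := (Finset.mem_filter.mp hCmem).2
  have hcover : (Finset.univ : Finset α) ⊆ C.biUnion fun c => insert c {y | R c y}.toFinset := by
    intro x _
    simp only [Finset.mem_biUnion, Finset.mem_insert, mem_toFinset, mem_ofPred_eq]
    by_cases hx : x ∈ C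
    · exact ⟨x, hx, Or.inl rfl⟩
    by_contra! hfar
    have hins : ((insert x C : Finset α) : Set α).Pairwise fun x y => ¬ R x y := by
      rw [Finset.coe_insert]
      exact hC.insert fun c hc _ => ⟨fun h => (hfar c hc).2 (Std.Symm.symm _ _ h), (hfar c hc).2⟩
    have := hCmax _ (Finset.mem_filter.mpr ⟨Finset.mem_univ _, hins⟩)
    rw [Finset.card_insert_of_notMem hx] at this
    omega
  have hball : ∀ c, ((insert c {y | R c y}.toFinset).card : ℝ) ≤ 1 + K := fun c => by
    have := Finset.card_insert_le c {y | R c y}.toFinset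
    rw [← ncard_eq_toFinset_card'] at this
    linarith [hK c, (Nat.cast_le (α := ℝ)).2 this, Nat.cast_add_one (R := ℝ) {y | R c y}.ncard]
  refine ⟨C, hC, ?_⟩
  calc (Fintype.card α : ℝ) ≤ ∑ c ∈ C, ((insert c {y | R c y}.toFinset).card : ℝ) := by
        exact_mod_cast (Finset.card_le_card hcover).trans Finset.card_biUnion_le
    _ ≤ ∑ _c ∈ C, (1 + K) := Finset.sum_le_sum fun c _ => hball c
    _ = C.card * (1 + K) := by rw [Finset.sum_const, nsmul_eq_mul]

theorem sub_logb_div_le_logb_div {b l c M : ℝ} {n : ℕ} (hb : 1 < b) (hl : 1 ≤ l) (hM : 0 < M)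
    (hn : 0 < n) (h : b ^ n ≤ M * (1 + (c * l ^ n) ^ 2)) :
    1 - 2 * Real.logb b l - Real.logb b (1 + c ^ 2) / n ≤ Real.logb b M / n := by
  have hl2n : 1 ≤ l ^ (2 * n) := one_le_pow₀ hl
  have hsq : 1 + (c * l ^ n) ^ 2 ≤ (1 + c ^ 2) * l ^ (2 * n) := by
    rw [mul_pow, ← pow_mul, mul_comm n]
    nlinarith [sq_nonneg c]
  have hlog : (n : ℝ) ≤ Real.logb b M + Real.logb b (1 + c ^ 2) + 2 * n * Real.logb b l := by
    have := Real.logb_le_logb_of_le hb (by positivity) (h.trans (mul_le_mul_of_nonneg_left hsq hM.le))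
    rwa [Real.logb_pow, Real.logb_self_eq_one hb, mul_one, Real.logb_mul hM.ne' (by positivity),
      Real.logb_mul (by positivity) (by positivity), Real.logb_pow, ← add_assoc, Nat.cast_mul,
      Nat.cast_ofNat] at this
  have hn' : (0 : ℝ) < n := by exact_mod_cast hn
  rw [le_div_iff₀ hn', sub_mul, sub_mul, div_mul_cancel₀ _ hn'.ne']
  linarith

theorem le_of_forall_sub_div_le {a b C : ℝ} (h : ∀ n : ℕ, 0 < n → a - b / n ≤ C) : a ≤ C := by
  have hlim : Tendsto (fun n : ℕ => a - b / n) atTop (𝓝 a) := by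
    simpa using tendsto_const_nhds.sub (tendsto_const_div_atTop_nhds_zero_nat b)
  exact le_of_tendsto hlim (eventually_atTop.2 ⟨1, fun n hn => h n hn⟩)

theorem stmt18_general {X S : Type*} [Fintype X] [AddGroup X] [Fintype S]
    (q : ℕ) (hq : 2 ≤ q) (hcard : Fintype.card X = q)
    (𝒱 : S → (n : ℕ) → Set (Fin n → X))
    (lam β : ℝ) (hlam : 1 ≤ lam)
    (hcount : ∀ (s : S) (n : ℕ), (Nat.card (𝒱 s n) : ℝ) ≤ β * lam ^ n)
    (C0 : ℝ)
    (hC0 : IsLUB {r : ℝ | ∃ (n : ℕ) (𝒞 : Finset (Fin n → X)), 0 < n ∧ 0 < 𝒞.card ∧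
      (∀ x ∈ 𝒞, ∀ x' ∈ 𝒞, x ≠ x' →
        ¬ ∃ (s s' : S), ∃ v ∈ 𝒱 s n, ∃ v' ∈ 𝒱 s' n, x + v = x' + v') ∧
      r = Real.logb q 𝒞.card / n} C0) :
    (∀ (n : ℕ) (c : Fin n → X),
      ((Nat.card {x' : Fin n → X |
          ∃ (s s' : S), ∃ v ∈ 𝒱 s n, ∃ v' ∈ 𝒱 s' n, c + v = x' + v'} : ℕ) : ℝ)
        ≤ (β * (Fintype.card S : ℝ) * lam ^ n) ^ 2) ∧
    1 - 2 * Real.logb q lam ≤ C0 := by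
  have hconf : ∀ n (c : Fin n → X), ({x | Confusable (⋃ s, 𝒱 s n) c x}.ncard : ℝ) ≤
      (β * Fintype.card S * lam ^ n) ^ 2 := fun n c => by
    have hnoise := ncard_iUnion_le_card_mul (fun s => 𝒱 s n) fun s => by
      simpa only [Nat.card_coe_set_eq] using hcount s n
    refine (Nat.cast_le.2 (ncard_setOf_confusable_le (toFinite _) c)).trans ?_
    push_cast
    exact pow_le_pow_left₀ (Nat.cast_nonneg _) (hnoise.trans_eq (by ring)) 2
  refine ⟨fun n c => by simpa only [Nat.card_coe_set_eq, confusable_iUnion] using hconf n c, ?_⟩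
  refine le_of_forall_sub_div_le (b := Real.logb q (1 + (β * Fintype.card S) ^ 2)) fun n hn => ?_
  obtain ⟨C, hC, hcover⟩ := exists_pairwise_not_card_le_mul (hconf n)
  have hqn : (q : ℝ) ^ n ≤ C.card * (1 + (β * Fintype.card S * lam ^ n) ^ 2) := by
    simpa [hcard] using hcover
  have hCpos : 0 < C.card := Nat.pos_of_ne_zero fun h => by
    rw [h, Nat.cast_zero, zero_mul] at hqn
    exact hqn.not_gt (by positivity)
  have hq1 : (1 : ℝ) < q := by exact_mod_cast hq
  refine (sub_logb_div_le_logb_div hq1 hlam (by exact_mod_cast hCpos) hn hqn).trans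
    (hC0.1 ⟨n, C, hn, hCpos, fun x hx y hy hxy => ?_, rfl⟩)
  rw [← confusable_iUnion]
  exact hC hx hy hxy

/-- For a finite-state additive noise channel: the confusability set of each codeword of
length `n` has size at most `(β |S| λⁿ)²`, and consequently `C₀ ≥ 1 − 2 log_q λ`. -/
theorem stmt18 {X S : Type*} [Fintype X] [DecidableEq X] [AddGroup X] [Fintype S] [Nonempty S]
    (q : ℕ) (hq : 2 ≤ q) (hcard : Fintype.card X = q)
    (T : S → X → S → Prop)
    (𝒱 : S → (n : ℕ) → Set (Fin n → X))
    (h𝒱 : ∀ (s : S) (n : ℕ), 𝒱 s n = {v | ∃ σ : Fin (n + 1) → S, σ 0 = s ∧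
      ∀ i : Fin n, T (σ i.castSucc) (v i) (σ i.succ)})
    (lam β : ℝ) (hβ : 0 < β) (hlam : 1 ≤ lam)
    (hcount : ∀ (s : S) (n : ℕ), (Nat.card (𝒱 s n) : ℝ) ≤ β * lam ^ n)
    (C0 : ℝ)
    (hC0 : IsLUB {r : ℝ | ∃ (n : ℕ) (𝒞 : Finset (Fin n → X)), 0 < n ∧ 0 < 𝒞.card ∧
      (∀ x ∈ 𝒞, ∀ x' ∈ 𝒞, x ≠ x' →
        ¬ ∃ (s s' : S), ∃ v ∈ 𝒱 s n, ∃ v' ∈ 𝒱 s' n, x + v = x' + v') ∧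
      r = Real.logb q 𝒞.card / n} C0) :
    (∀ (n : ℕ) (c : Fin n → X),
      ((Nat.card {x' : Fin n → X |
          ∃ (s s' : S), ∃ v ∈ 𝒱 s n, ∃ v' ∈ 𝒱 s' n, c + v = x' + v'} : ℕ) : ℝ)
        ≤ (β * (Fintype.card S : ℝ) * lam ^ n) ^ 2) ∧
    1 - 2 * Real.logb q lam ≤ C0 :=
  stmt18_general q hq hcard 𝒱 lam β hlam hcount C0 hC0
end
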